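/- arXiv:2407.00730 — 3 statements merged into one kernel-verified Lean document; each statement's English description precedes it below -/
import Mathlib

section
/- Let z₁, z₂, z_I be standardized real random variables on a probability space with cov(z₁,z₂)=ρ where ρ∈[0,1], and cov(z_I,z₁)=cov(z_I,z₂)=0. Define c = (ρ/(1+ρ))(z₁+z₂) + √(ρ(1−ρ)/(1+ρ))·z_I and dₖ = zₖ − c for k=1,2. Then cov(c,d₁)=0, cov(c,d₂)=0, and cov(d₁,d₂)=0. -/
open MeasureTheory

variable {Ω : Type*} {mΩ : MeasurableSpace Ω}

/-- Covariance of two real-valued random variables `X, Y` under measure `μ`. -/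
noncomputable def cov (μ : Measure Ω) (X Y : Ω → ℝ) : ℝ :=
  ∫ ω, (X ω - ∫ a, X a ∂μ) * (Y ω - ∫ a, Y a ∂μ) ∂μ

private lemma iadd {μ : Measure Ω} {f g : Ω → ℝ} (hf : Integrable f μ) (hg : Integrable g μ) :
    (∫ ω, f ω + g ω ∂μ) = (∫ ω, f ω ∂μ) + ∫ ω, g ω ∂μ := integral_add hf hg

private lemma mulInt {μ : Measure Ω} {f g : Ω → ℝ} (hf : MemLp f 2 μ) (hg : MemLp g 2 μ) :
    Integrable (fun ω => f ω * g ω) μ := by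
  have h1 : Integrable (fun ω => (f ω + g ω) ^ 2) μ := (hf.add hg).integrable_sq
  have h2 := hf.integrable_sq
  have h3 := hg.integrable_sq
  have heq : (fun ω => f ω * g ω)
      = fun ω => ((f ω + g ω) ^ 2 - f ω ^ 2 - g ω ^ 2) / 2 := by funext ω; ring
  rw [heq]
  exact ((h1.sub h2).sub h3).div_const 2

/-- For standardized `z₁, z₂, z_I` with `cov(z₁,z₂) = ρ ∈ [0,1]` and `z_I`
uncorrelated with `z₁, z₂`, the D-CDLF decomposition
`c = (ρ/(1+ρ))(z₁+z₂) + √(ρ(1−ρ)/(1+ρ))·z_I`, `dₖ = zₖ − c` satisfies the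
tri-orthogonality `cov(c,d₁) = cov(c,d₂) = cov(d₁,d₂) = 0`. -/
theorem stmt0 (μ : Measure Ω) [IsProbabilityMeasure μ]
    (z₁ z₂ zI : Ω → ℝ) (ρ : ℝ)
    (hL₁ : MemLp z₁ 2 μ) (hL₂ : MemLp z₂ 2 μ) (hLI : MemLp zI 2 μ)
    (hm₁ : (∫ ω, z₁ ω ∂μ) = 0) (hm₂ : (∫ ω, z₂ ω ∂μ) = 0) (hmI : (∫ ω, zI ω ∂μ) = 0)
    (hv₁ : cov μ z₁ z₁ = 1) (hv₂ : cov μ z₂ z₂ = 1) (hvI : cov μ zI zI = 1)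
    (hρ0 : 0 ≤ ρ) (hρ1 : ρ ≤ 1) (h12 : cov μ z₁ z₂ = ρ)
    (hI1 : cov μ zI z₁ = 0) (hI2 : cov μ zI z₂ = 0)
    (c d₁ d₂ : Ω → ℝ)
    (hc : c = fun ω => (ρ / (1 + ρ)) * (z₁ ω + z₂ ω)
        + Real.sqrt (ρ * (1 - ρ) / (1 + ρ)) * zI ω)
    (hd₁ : d₁ = fun ω => z₁ ω - c ω) (hd₂ : d₂ = fun ω => z₂ ω - c ω) :
    cov μ c d₁ = 0 ∧ cov μ c d₂ = 0 ∧ cov μ d₁ d₂ = 0 := by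
  set a : ℝ := ρ / (1 + ρ) with ha
  set b : ℝ := Real.sqrt (ρ * (1 - ρ) / (1 + ρ)) with hb
  have h1ρ : (0:ℝ) < 1 + ρ := by linarith
  have hbb : b * b = ρ * (1 - ρ) / (1 + ρ) :=
    Real.mul_self_sqrt (div_nonneg (mul_nonneg hρ0 (by linarith)) (le_of_lt h1ρ))
  -- base product integrals
  simp only [cov, hm₁, hm₂, hmI, sub_zero] at hv₁ hv₂ hvI h12 hI1 hI2
  have hI1' : (∫ ω, z₁ ω * zI ω ∂μ) = 0 := by
    rw [show (fun ω => z₁ ω * zI ω) = fun ω => zI ω * z₁ ω from funext fun ω => mul_comm _ _]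
    exact hI1
  have hI2' : (∫ ω, z₂ ω * zI ω ∂μ) = 0 := by
    rw [show (fun ω => z₂ ω * zI ω) = fun ω => zI ω * z₂ ω from funext fun ω => mul_comm _ _]
    exact hI2
  -- integrability
  have int11 := mulInt hL₁ hL₁
  have int12 := mulInt hL₁ hL₂
  have int1I := mulInt hL₁ hLI
  have int22 := mulInt hL₂ hL₂
  have int2I := mulInt hL₂ hLI
  have intII := mulInt hLI hLI
  have i₁ := hL₁.integrable one_le_two
  have i₂ := hL₂.integrable one_le_two
  have iI := hLI.integrable one_le_two
  -- general expansion
  have expand : ∀ p q r u v w : ℝ,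
      (∫ ω, (p * z₁ ω + q * z₂ ω + r * zI ω) * (u * z₁ ω + v * z₂ ω + w * zI ω) ∂μ)
      = p * u * (∫ ω, z₁ ω * z₁ ω ∂μ) + (p * v + q * u) * (∫ ω, z₁ ω * z₂ ω ∂μ)
        + (p * w + r * u) * (∫ ω, z₁ ω * zI ω ∂μ) + q * v * (∫ ω, z₂ ω * z₂ ω ∂μ)
        + (q * w + r * v) * (∫ ω, z₂ ω * zI ω ∂μ) + r * w * (∫ ω, zI ω * zI ω ∂μ) := by
    intro p q r u v w
    have heq : (fun ω => (p * z₁ ω + q * z₂ ω + r * zI ω) * (u * z₁ ω + v * z₂ ω + w * zI ω))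
        = fun ω => p * u * (z₁ ω * z₁ ω) + ((p * v + q * u) * (z₁ ω * z₂ ω)
          + ((p * w + r * u) * (z₁ ω * zI ω) + (q * v * (z₂ ω * z₂ ω)
          + ((q * w + r * v) * (z₂ ω * zI ω) + r * w * (zI ω * zI ω))))) := by
      funext ω; ring
    have j1 := int11.const_mul (p * u)
    have j2 := int12.const_mul (p * v + q * u)
    have j3 := int1I.const_mul (p * w + r * u)
    have j4 := int22.const_mul (q * v)
    have j5 := int2I.const_mul (q * w + r * v)
    have j6 := intII.const_mul (r * w)
    have e1 := integral_add j1 (j2.add (j3.add (j4.add (j5.add j6))))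
    have e2 := integral_add j2 (j3.add (j4.add (j5.add j6)))
    have e3 := integral_add j3 (j4.add (j5.add j6))
    have e4 := integral_add j4 (j5.add j6)
    have e5 := integral_add j5 j6
    simp only [Pi.add_apply] at e1 e2 e3 e4 e5
    rw [heq, e1, e2, e3, e4, e5,
      integral_const_mul _ _, integral_const_mul _ _, integral_const_mul _ _,
      integral_const_mul _ _, integral_const_mul _ _, integral_const_mul _ _]
    ring
  -- rewrite c, d₁, d₂ in canonical form
  have hc' : c = fun ω => a * z₁ ω + a * z₂ ω + b * zI ω := by
    rw [hc]; funext ω; ring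
  have hd₁' : d₁ = fun ω => (1 - a) * z₁ ω + (-a) * z₂ ω + (-b) * zI ω := by
    rw [hd₁, hc]; funext ω; ring
  have hd₂' : d₂ = fun ω => (-a) * z₁ ω + (1 - a) * z₂ ω + (-b) * zI ω := by
    rw [hd₂, hc]; funext ω; ring
  -- zero means
  have ic : Integrable c μ := by
    rw [hc']; exact ((i₁.const_mul a).add (i₂.const_mul a)).add (iI.const_mul b)
  have hmc : (∫ ω, c ω ∂μ) = 0 := by
    simp only [hc']
    have e1 := integral_add ((i₁.const_mul a).add (i₂.const_mul a)) (iI.const_mul b)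
    have e2 := integral_add (i₁.const_mul a) (i₂.const_mul a)
    simp only [Pi.add_apply] at e1 e2
    rw [e1, e2, integral_const_mul _ _, integral_const_mul _ _, integral_const_mul _ _, hm₁, hm₂, hmI]
    ring
  have hmd₁ : (∫ ω, d₁ ω ∂μ) = 0 := by
    simp only [hd₁]
    rw [integral_sub i₁ ic, hm₁, hmc]; ring
  have hmd₂ : (∫ ω, d₂ ω ∂μ) = 0 := by
    simp only [hd₂]
    rw [integral_sub i₂ ic, hm₂, hmc]; ring
  refine ⟨?_, ?_, ?_⟩
  · simp only [cov, hmc, hmd₁, sub_zero]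
    rw [show (fun ω => c ω * d₁ ω) = fun ω =>
        (a * z₁ ω + a * z₂ ω + b * zI ω) *
          ((1 - a) * z₁ ω + (-a) * z₂ ω + (-b) * zI ω) by funext ω; simp only [hc', hd₁'],
      expand, hv₁, hv₂, hvI, h12, hI1', hI2']
    have hbb' : b * b * (1 + ρ) = ρ * (1 - ρ) := by
      rw [hbb]; field_simp
    field_simp [ha]
    rw [show b ^ 2 = ρ * (1 - ρ) / (1 + ρ) by rw [sq, hbb], ha]
    field_simp
    ring
  · simp only [cov, hmc, hmd₂, sub_zero]
    rw [show (fun ω => c ω * d₂ ω) = fun ω =>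
        (a * z₁ ω + a * z₂ ω + b * zI ω) *
          ((-a) * z₁ ω + (1 - a) * z₂ ω + (-b) * zI ω) by funext ω; simp only [hc', hd₂'],
      expand, hv₁, hv₂, hvI, h12, hI1', hI2']
    have hbb' : b * b * (1 + ρ) = ρ * (1 - ρ) := by
      rw [hbb]; field_simp
    field_simp [ha]
    rw [show b ^ 2 = ρ * (1 - ρ) / (1 + ρ) by rw [sq, hbb], ha]
    field_simp
    ring
  · simp only [cov, hmd₁, hmd₂, sub_zero]
    rw [show (fun ω => d₁ ω * d₂ ω) = fun ω =>
        ((1 - a) * z₁ ω + (-a) * z₂ ω + (-b) * zI ω) *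
          ((-a) * z₁ ω + (1 - a) * z₂ ω + (-b) * zI ω) by funext ω; simp only [hd₁', hd₂'],
      expand, hv₁, hv₂, hvI, h12, hI1', hI2']
    have hbb' : b * b * (1 + ρ) = ρ * (1 - ρ) := by
      rw [hbb]; field_simp
    field_simp [ha]
    rw [show b ^ 2 = ρ * (1 - ρ) / (1 + ρ) by rw [sq, hbb], ha]
    field_simp
    ring
end

section
/- Let z₁, z₂, z_I be standardized real random variables on a probability space with cov(z₁,z₂)=ρ where ρ∈[0,1], and cov(z_I,z₁)=cov(z_I,z₂)=0. Define c = (ρ/(1+ρ))(z₁+z₂) + √(ρ(1−ρ)/(1+ρ))·z_I and dₖ = zₖ − c for k=1,2. Then Var(c)=ρ and Var(d₁)=Var(d₂)=1−ρ. -/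
open MeasureTheory

variable {Ω : Type*} {mΩ : MeasurableSpace Ω}

lemma int_mul {μ : Measure Ω} {X Y : Ω → ℝ}
    (hX : MemLp X 2 μ) (hY : MemLp Y 2 μ) : Integrable (fun ω => X ω * Y ω) μ := by
  have h : MemLp (X • Y) 1 μ := hY.smul hX
  rw [memLp_one_iff_integrable] at h
  simpa [smul_eq_mul, Pi.mul_def] using h

lemma cov_eq_int {μ : Measure Ω} {X Y : Ω → ℝ}
    (hX : (∫ ω, X ω ∂μ) = 0) (hY : (∫ ω, Y ω ∂μ) = 0) :
    cov μ X Y = ∫ ω, X ω * Y ω ∂μ := by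
  simp [cov, hX, hY]

lemma quad_int {μ : Measure Ω} {f g h : Ω → ℝ}
    (hf : MemLp f 2 μ) (hg : MemLp g 2 μ) (hh : MemLp h 2 μ) (p q r : ℝ) :
    ∫ ω, (p * f ω + q * g ω + r * h ω) * (p * f ω + q * g ω + r * h ω) ∂μ
      = p^2 * (∫ ω, f ω * f ω ∂μ) + q^2 * (∫ ω, g ω * g ω ∂μ)
        + r^2 * (∫ ω, h ω * h ω ∂μ) + 2*p*q * (∫ ω, f ω * g ω ∂μ)
        + 2*p*r * (∫ ω, h ω * f ω ∂μ) + 2*q*r * (∫ ω, h ω * g ω ∂μ) := by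
  have i1 : Integrable (fun ω => p^2 * (f ω * f ω)) μ := (int_mul hf hf).const_mul _
  have i2 : Integrable (fun ω => q^2 * (g ω * g ω)) μ := (int_mul hg hg).const_mul _
  have i3 : Integrable (fun ω => r^2 * (h ω * h ω)) μ := (int_mul hh hh).const_mul _
  have i4 : Integrable (fun ω => 2*p*q * (f ω * g ω)) μ := (int_mul hf hg).const_mul _
  have i5 : Integrable (fun ω => 2*p*r * (h ω * f ω)) μ := (int_mul hh hf).const_mul _
  have i6 : Integrable (fun ω => 2*q*r * (h ω * g ω)) μ := (int_mul hh hg).const_mul _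
  have e : (fun ω => (p * f ω + q * g ω + r * h ω) * (p * f ω + q * g ω + r * h ω))
      = fun ω => p^2 * (f ω * f ω) + q^2 * (g ω * g ω) + r^2 * (h ω * h ω)
        + 2*p*q * (f ω * g ω) + 2*p*r * (h ω * f ω) + 2*q*r * (h ω * g ω) := by
    funext ω; ring
  rw [show (∫ ω, (p * f ω + q * g ω + r * h ω) * (p * f ω + q * g ω + r * h ω) ∂μ)
      = ∫ ω, (p^2 * (f ω * f ω) + q^2 * (g ω * g ω) + r^2 * (h ω * h ω)
        + 2*p*q * (f ω * g ω) + 2*p*r * (h ω * f ω) + 2*q*r * (h ω * g ω)) ∂μ from by rw [e]]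
  have i12 : Integrable (fun ω => p^2 * (f ω * f ω) + q^2 * (g ω * g ω)) μ := i1.add i2
  have i13 : Integrable (fun ω => p^2 * (f ω * f ω) + q^2 * (g ω * g ω)
      + r^2 * (h ω * h ω)) μ := i12.add i3
  have i14 : Integrable (fun ω => p^2 * (f ω * f ω) + q^2 * (g ω * g ω)
      + r^2 * (h ω * h ω) + 2*p*q * (f ω * g ω)) μ := i13.add i4
  have i15 : Integrable (fun ω => p^2 * (f ω * f ω) + q^2 * (g ω * g ω)
      + r^2 * (h ω * h ω) + 2*p*q * (f ω * g ω) + 2*p*r * (h ω * f ω)) μ := i14.add i5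
  rw [integral_add i15 i6, integral_add i14 i5, integral_add i13 i4,
      integral_add i12 i3, integral_add i1 i2]
  simp only [integral_const_mul]

lemma lin_int {μ : Measure Ω} {f g h : Ω → ℝ}
    (hf : Integrable f μ) (hg : Integrable g μ) (hh : Integrable h μ) (p q r : ℝ) :
    ∫ ω, (p * f ω + q * g ω + r * h ω) ∂μ
      = p * (∫ ω, f ω ∂μ) + q * (∫ ω, g ω ∂μ) + r * (∫ ω, h ω ∂μ) := by
  have j1 : Integrable (fun ω => p * f ω) μ := hf.const_mul p
  have j2 : Integrable (fun ω => q * g ω) μ := hg.const_mul q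
  have j3 : Integrable (fun ω => r * h ω) μ := hh.const_mul r
  have j12 : Integrable (fun ω => p * f ω + q * g ω) μ := j1.add j2
  rw [integral_add j12 j3, integral_add j1 j2]
  simp only [integral_const_mul]


/-- For the D-CDLF decomposition of two standardized variables with
correlation `ρ ∈ [0,1]`, `Var(c) = ρ` and `Var(d₁) = Var(d₂) = 1 − ρ`. -/
theorem stmt1 (μ : Measure Ω) [IsProbabilityMeasure μ]
    (z₁ z₂ zI : Ω → ℝ) (ρ : ℝ)
    (hL₁ : MemLp z₁ 2 μ) (hL₂ : MemLp z₂ 2 μ) (hLI : MemLp zI 2 μ)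
    (hm₁ : (∫ ω, z₁ ω ∂μ) = 0) (hm₂ : (∫ ω, z₂ ω ∂μ) = 0) (hmI : (∫ ω, zI ω ∂μ) = 0)
    (hv₁ : cov μ z₁ z₁ = 1) (hv₂ : cov μ z₂ z₂ = 1) (hvI : cov μ zI zI = 1)
    (hρ0 : 0 ≤ ρ) (hρ1 : ρ ≤ 1) (h12 : cov μ z₁ z₂ = ρ)
    (hI1 : cov μ zI z₁ = 0) (hI2 : cov μ zI z₂ = 0)
    (c d₁ d₂ : Ω → ℝ)
    (hc : c = fun ω => (ρ / (1 + ρ)) * (z₁ ω + z₂ ω)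
        + Real.sqrt (ρ * (1 - ρ) / (1 + ρ)) * zI ω)
    (hd₁ : d₁ = fun ω => z₁ ω - c ω) (hd₂ : d₂ = fun ω => z₂ ω - c ω) :
    cov μ c c = ρ ∧ cov μ d₁ d₁ = 1 - ρ ∧ cov μ d₂ d₂ = 1 - ρ := by
  have h1ρ : (0:ℝ) < 1 + ρ := by linarith
  have h1ρ' : (1:ℝ) + ρ ≠ 0 := ne_of_gt h1ρ
  set b : ℝ := Real.sqrt (ρ * (1 - ρ) / (1 + ρ)) with hb
  have hb2 : b ^ 2 = ρ * (1 - ρ) / (1 + ρ) :=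
    Real.sq_sqrt (div_nonneg (mul_nonneg hρ0 (by linarith)) (le_of_lt h1ρ))
  -- integrals of products
  have Eff : (∫ ω, z₁ ω * z₁ ω ∂μ) = 1 := by rw [← cov_eq_int hm₁ hm₁]; exact hv₁
  have Egg : (∫ ω, z₂ ω * z₂ ω ∂μ) = 1 := by rw [← cov_eq_int hm₂ hm₂]; exact hv₂
  have Ehh : (∫ ω, zI ω * zI ω ∂μ) = 1 := by rw [← cov_eq_int hmI hmI]; exact hvI
  have Efg : (∫ ω, z₁ ω * z₂ ω ∂μ) = ρ := by rw [← cov_eq_int hm₁ hm₂]; exact h12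
  have Ehf : (∫ ω, zI ω * z₁ ω ∂μ) = 0 := by rw [← cov_eq_int hmI hm₁]; exact hI1
  have Ehg : (∫ ω, zI ω * z₂ ω ∂μ) = 0 := by rw [← cov_eq_int hmI hm₂]; exact hI2
  have if₁ : Integrable z₁ μ := hL₁.integrable one_le_two
  have ig₁ : Integrable z₂ μ := hL₂.integrable one_le_two
  have ih₁ : Integrable zI μ := hLI.integrable one_le_two
  -- main computation for a linear combination
  have main : ∀ p q r : ℝ,
      cov μ (fun ω => p * z₁ ω + q * z₂ ω + r * zI ω)
            (fun ω => p * z₁ ω + q * z₂ ω + r * zI ω)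
        = p^2 + q^2 + r^2 + 2*p*q*ρ := by
    intro p q r
    have mz : (∫ ω, (p * z₁ ω + q * z₂ ω + r * zI ω) ∂μ) = 0 := by
      rw [lin_int if₁ ig₁ ih₁, hm₁, hm₂, hmI]; ring
    rw [cov_eq_int mz mz, quad_int hL₁ hL₂ hLI, Eff, Egg, Ehh, Efg, Ehf, Ehg]
    ring
  have ec : c = fun ω => (ρ/(1+ρ)) * z₁ ω + (ρ/(1+ρ)) * z₂ ω + b * zI ω := by
    rw [hc]; funext ω; ring
  have ed₁ : d₁ = fun ω => (1 - ρ/(1+ρ)) * z₁ ω + (-(ρ/(1+ρ))) * z₂ ω + (-b) * zI ω := by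
    rw [hd₁, hc]; funext ω; ring
  have ed₂ : d₂ = fun ω => (-(ρ/(1+ρ))) * z₁ ω + (1 - ρ/(1+ρ)) * z₂ ω + (-b) * zI ω := by
    rw [hd₂, hc]; funext ω; ring
  have main₂ : ∀ p q r : ℝ,
      cov μ (fun ω => p * z₁ ω + q * z₂ ω + r * zI ω)
            (fun ω => p * z₁ ω + q * z₂ ω + r * zI ω)
        = q^2 + p^2 + r^2 + 2*q*p*ρ := by
    intro p q r; rw [main]; ring
  refine ⟨?_, ?_, ?_⟩
  · rw [ec, main, hb2]; field_simp; ring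
  · rw [ed₁, main]
    have : (-b)^2 = ρ * (1 - ρ) / (1 + ρ) := by rw [neg_pow]; simp [hb2]
    rw [this]; field_simp; ring
  · rw [ed₂, main]
    have : (-b)^2 = ρ * (1 - ρ) / (1 + ρ) := by rw [neg_pow]; simp [hb2]
    rw [this]; field_simp; ring
end

section
/- Let z₁, z₂, z_I be standardized real random variables on a probability space with cov(z₁,z₂)=ρ where ρ∈[0,1], and cov(z_I,z₁)=cov(z_I,z₂)=0. Suppose c = a₁z₁ + a₂z₂ + a₃z_I for real coefficients a₁,a₂,a₃, and set dₖ = zₖ − c for k=1,2. If cov(c,d₁)=cov(c,d₂)=cov(d₁,d₂)=0, then almost surely c = (ρ/(1+ρ))(z₁+z₂) + ε·√(ρ(1−ρ)/(1+ρ))·z_I for some sign ε ∈ {−1,+1}. -/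
open MeasureTheory

variable {Ω : Type*} {mΩ : MeasurableSpace Ω}

private lemma combInt {μ : Measure Ω} {f g h : Ω → ℝ} (ρ v11 v22 vhh v12 v1h v2h : ℝ)
    (hf : MemLp f 2 μ) (hg : MemLp g 2 μ) (hh : MemLp h 2 μ)
    (e11 : (∫ ω, f ω * f ω ∂μ) = v11) (e22 : (∫ ω, g ω * g ω ∂μ) = v22)
    (ehh : (∫ ω, h ω * h ω ∂μ) = vhh) (e12 : (∫ ω, f ω * g ω ∂μ) = v12)
    (e1h : (∫ ω, f ω * h ω ∂μ) = v1h) (e2h : (∫ ω, g ω * h ω ∂μ) = v2h)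
    (b₁ b₂ b₃ c₁ c₂ c₃ : ℝ) :
    (∫ ω, (b₁ * f ω + b₂ * g ω + b₃ * h ω) * (c₁ * f ω + c₂ * g ω + c₃ * h ω) ∂μ)
      = b₁*c₁*v11 + (b₁*c₂+b₂*c₁)*v12 + b₂*c₂*v22 + b₃*c₃*vhh
        + (b₁*c₃+b₃*c₁)*v1h + (b₂*c₃+b₃*c₂)*v2h := by
  have j11 : Integrable (fun ω => b₁*c₁ * (f ω * f ω)) μ := (mulInt hf hf).const_mul _
  have j12 : Integrable (fun ω => (b₁*c₂+b₂*c₁) * (f ω * g ω)) μ := (mulInt hf hg).const_mul _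
  have j22 : Integrable (fun ω => b₂*c₂ * (g ω * g ω)) μ := (mulInt hg hg).const_mul _
  have jhh : Integrable (fun ω => b₃*c₃ * (h ω * h ω)) μ := (mulInt hh hh).const_mul _
  have j1h : Integrable (fun ω => (b₁*c₃+b₃*c₁) * (f ω * h ω)) μ := (mulInt hf hh).const_mul _
  have j2h : Integrable (fun ω => (b₂*c₃+b₃*c₂) * (g ω * h ω)) μ := (mulInt hg hh).const_mul _
  have s5 : Integrable (fun ω => (b₁*c₃+b₃*c₁) * (f ω * h ω)
      + (b₂*c₃+b₃*c₂) * (g ω * h ω)) μ := j1h.add j2h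
  have s4 : Integrable (fun ω => b₃*c₃ * (h ω * h ω) + ((b₁*c₃+b₃*c₁) * (f ω * h ω)
      + (b₂*c₃+b₃*c₂) * (g ω * h ω))) μ := jhh.add s5
  have s3 : Integrable (fun ω => b₂*c₂ * (g ω * g ω) + (b₃*c₃ * (h ω * h ω)
      + ((b₁*c₃+b₃*c₁) * (f ω * h ω) + (b₂*c₃+b₃*c₂) * (g ω * h ω)))) μ := j22.add s4
  have s2 : Integrable (fun ω => (b₁*c₂+b₂*c₁) * (f ω * g ω) + (b₂*c₂ * (g ω * g ω)
      + (b₃*c₃ * (h ω * h ω) + ((b₁*c₃+b₃*c₁) * (f ω * h ω)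
      + (b₂*c₃+b₃*c₂) * (g ω * h ω))))) μ := j12.add s3
  have key : (∫ ω, (b₁ * f ω + b₂ * g ω + b₃ * h ω) * (c₁ * f ω + c₂ * g ω + c₃ * h ω) ∂μ)
      = ∫ ω, b₁*c₁*(f ω * f ω) + ((b₁*c₂+b₂*c₁)*(f ω * g ω) + (b₂*c₂*(g ω * g ω)
        + (b₃*c₃*(h ω * h ω) + ((b₁*c₃+b₃*c₁)*(f ω * h ω) + (b₂*c₃+b₃*c₂)*(g ω * h ω))))) ∂μ :=
    integral_congr_ae (Filter.Eventually.of_forall fun ω => by ring)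
  rw [key, integral_add j11 s2, integral_add j12 s3, integral_add j22 s4, integral_add jhh s5,
    integral_add j1h j2h, integral_const_mul, integral_const_mul, integral_const_mul,
    integral_const_mul, integral_const_mul, integral_const_mul, e11, e22, ehh, e12, e1h, e2h]
  ring

set_option maxHeartbeats 1000000 in
/-- Uniqueness of `c`, Proposition 1: if `c = a₁z₁ + a₂z₂ + a₃z_I` and the
tri-orthogonality `cov(c,d₁) = cov(c,d₂) = cov(d₁,d₂) = 0` holds for `dₖ = zₖ − c`, then
almost surely `c = (ρ/(1+ρ))(z₁+z₂) ± √(ρ(1−ρ)/(1+ρ))·z_I`. -/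
theorem stmt2 (μ : Measure Ω) [IsProbabilityMeasure μ]
    (z₁ z₂ zI : Ω → ℝ) (ρ : ℝ)
    (hL₁ : MemLp z₁ 2 μ) (hL₂ : MemLp z₂ 2 μ) (hLI : MemLp zI 2 μ)
    (hm₁ : (∫ ω, z₁ ω ∂μ) = 0) (hm₂ : (∫ ω, z₂ ω ∂μ) = 0) (hmI : (∫ ω, zI ω ∂μ) = 0)
    (hv₁ : cov μ z₁ z₁ = 1) (hv₂ : cov μ z₂ z₂ = 1) (hvI : cov μ zI zI = 1)
    (hρ0 : 0 ≤ ρ) (hρ1 : ρ ≤ 1) (h12 : cov μ z₁ z₂ = ρ)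
    (hI1 : cov μ zI z₁ = 0) (hI2 : cov μ zI z₂ = 0)
    (a₁ a₂ a₃ : ℝ) (c d₁ d₂ : Ω → ℝ)
    (hc : c = fun ω => a₁ * z₁ ω + a₂ * z₂ ω + a₃ * zI ω)
    (hd₁ : d₁ = fun ω => z₁ ω - c ω) (hd₂ : d₂ = fun ω => z₂ ω - c ω)
    (hcd₁ : cov μ c d₁ = 0) (hcd₂ : cov μ c d₂ = 0) (hd₁d₂ : cov μ d₁ d₂ = 0) :
    ∃ ε : ℝ, (ε = 1 ∨ ε = -1) ∧
      c =ᵐ[μ] fun ω => (ρ / (1 + ρ)) * (z₁ ω + z₂ ω)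
        + ε * Real.sqrt (ρ * (1 - ρ) / (1 + ρ)) * zI ω := by
  have i₁ : Integrable z₁ μ := hL₁.integrable one_le_two
  have i₂ : Integrable z₂ μ := hL₂.integrable one_le_two
  have iI : Integrable zI μ := hLI.integrable one_le_two
  have i12 : Integrable (fun ω => a₁ * z₁ ω + a₂ * z₂ ω) μ :=
    (i₁.const_mul _).add (i₂.const_mul _)
  have ic : Integrable c μ := by
    rw [hc]; exact i12.add (iI.const_mul _)
  -- product integral values
  have e11 : (∫ ω, z₁ ω * z₁ ω ∂μ) = 1 := by simpa [cov, hm₁] using hv₁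
  have e22 : (∫ ω, z₂ ω * z₂ ω ∂μ) = 1 := by simpa [cov, hm₂] using hv₂
  have eII : (∫ ω, zI ω * zI ω ∂μ) = 1 := by simpa [cov, hmI] using hvI
  have e12 : (∫ ω, z₁ ω * z₂ ω ∂μ) = ρ := by simpa [cov, hm₁, hm₂] using h12
  have e1I : (∫ ω, z₁ ω * zI ω ∂μ) = 0 := by
    have h : (∫ ω, zI ω * z₁ ω ∂μ) = 0 := by simpa [cov, hmI, hm₁] using hI1
    rw [← h]; exact integral_congr_ae (Filter.Eventually.of_forall fun ω => mul_comm _ _)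
  have e2I : (∫ ω, z₂ ω * zI ω ∂μ) = 0 := by
    have h : (∫ ω, zI ω * z₂ ω ∂μ) = 0 := by simpa [cov, hmI, hm₂] using hI2
    rw [← h]; exact integral_congr_ae (Filter.Eventually.of_forall fun ω => mul_comm _ _)
  have comb := combInt (μ := μ) ρ 1 1 1 ρ 0 0 hL₁ hL₂ hLI e11 e22 eII e12 e1I e2I
  -- means of c, d₁, d₂
  have hmc : (∫ ω, c ω ∂μ) = 0 := by
    have h : (∫ ω, c ω ∂μ) = ∫ ω, a₁ * z₁ ω + a₂ * z₂ ω + a₃ * zI ω ∂μ :=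
      integral_congr_ae (Filter.Eventually.of_forall fun ω => by rw [hc])
    rw [h, integral_add i12 (iI.const_mul _), integral_add (i₁.const_mul _) (i₂.const_mul _),
      integral_const_mul, integral_const_mul, integral_const_mul, hm₁, hm₂, hmI]
    ring
  have hmd₁ : (∫ ω, d₁ ω ∂μ) = 0 := by
    have h : (∫ ω, d₁ ω ∂μ) = ∫ ω, z₁ ω - c ω ∂μ :=
      integral_congr_ae (Filter.Eventually.of_forall fun ω => by rw [hd₁])
    rw [h, integral_sub i₁ ic, hm₁, hmc, sub_zero]
  have hmd₂ : (∫ ω, d₂ ω ∂μ) = 0 := by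
    have h : (∫ ω, d₂ ω ∂μ) = ∫ ω, z₂ ω - c ω ∂μ :=
      integral_congr_ae (Filter.Eventually.of_forall fun ω => by rw [hd₂])
    rw [h, integral_sub i₂ ic, hm₂, hmc, sub_zero]
  -- the three scalar equations
  have E1 : a₁*(1-a₁)*1 + (a₁*(-a₂)+a₂*(1-a₁))*ρ + a₂*(-a₂)*1 + a₃*(-a₃)*1
      + (a₁*(-a₃)+a₃*(1-a₁))*0 + (a₂*(-a₃)+a₃*(-a₂))*0 = 0 := by
    rw [← comb a₁ a₂ a₃ (1-a₁) (-a₂) (-a₃), ← hcd₁]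
    unfold cov
    rw [hmc, hmd₁]
    refine integral_congr_ae (Filter.Eventually.of_forall fun ω => ?_)
    simp only [hd₁, hc, sub_zero]
    ring
  have E2 : a₁*(-a₁)*1 + (a₁*(1-a₂)+a₂*(-a₁))*ρ + a₂*(1-a₂)*1 + a₃*(-a₃)*1
      + (a₁*(-a₃)+a₃*(-a₁))*0 + (a₂*(-a₃)+a₃*(1-a₂))*0 = 0 := by
    rw [← comb a₁ a₂ a₃ (-a₁) (1-a₂) (-a₃), ← hcd₂]
    unfold cov
    rw [hmc, hmd₂]
    refine integral_congr_ae (Filter.Eventually.of_forall fun ω => ?_)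
    simp only [hd₂, hc, sub_zero]
    ring
  have E3 : (1-a₁)*(-a₁)*1 + ((1-a₁)*(1-a₂)+(-a₂)*(-a₁))*ρ + (-a₂)*(1-a₂)*1 + (-a₃)*(-a₃)*1
      + ((1-a₁)*(-a₃)+(-a₃)*(-a₁))*0 + ((-a₂)*(-a₃)+(-a₃)*(1-a₂))*0 = 0 := by
    rw [← comb (1-a₁) (-a₂) (-a₃) (-a₁) (1-a₂) (-a₃), ← hd₁d₂]
    unfold cov
    rw [hmd₁, hmd₂]
    refine integral_congr_ae (Filter.Eventually.of_forall fun ω => ?_)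
    simp only [hd₁, hd₂, hc, sub_zero]
    ring
  -- algebraic consequences
  have hs₁ : a₁ + a₂*ρ = a₁^2 + a₂^2 + 2*a₁*a₂*ρ + a₃^2 := by linear_combination E1
  have hs₂ : a₂ + a₁*ρ = a₁^2 + a₂^2 + 2*a₁*a₂*ρ + a₃^2 := by linear_combination E2
  have hvρ : ρ = a₁^2 + a₂^2 + 2*a₁*a₂*ρ + a₃^2 := by linear_combination E1 + E2 + E3
  rcases eq_or_lt_of_le hρ1 with hρeq | hρlt
  · -- ρ = 1 case
    subst hρeq
    have hsum : a₁ + a₂ = 1 := by linarith [hs₁, hvρ]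
    have ha₃ : a₃ = 0 := by
      have h3 : a₃^2 = 0 := by linear_combination -hvρ - (a₁+a₂+1)*hsum
      exact (pow_eq_zero_iff two_ne_zero).mp h3
    have hzz : (∫ ω, (z₁ ω - z₂ ω)^2 ∂μ) = 0 := by
      have h : (∫ ω, (z₁ ω - z₂ ω)^2 ∂μ)
          = ∫ ω, (1 * z₁ ω + (-1) * z₂ ω + 0 * zI ω) * (1 * z₁ ω + (-1) * z₂ ω + 0 * zI ω) ∂μ :=
        integral_congr_ae (Filter.Eventually.of_forall fun ω => by ring)
      rw [h, comb 1 (-1) 0 1 (-1) 0]; ring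
    have hint : Integrable (fun ω => (z₁ ω - z₂ ω)^2) μ :=
      (mulInt (hL₁.sub hL₂) (hL₁.sub hL₂)).congr
        (Filter.Eventually.of_forall fun ω => by simp only [Pi.sub_apply]; ring)
    have hae : (fun ω => (z₁ ω - z₂ ω)^2) =ᵐ[μ] 0 :=
      (integral_eq_zero_iff_of_nonneg (fun ω => sq_nonneg (z₁ ω - z₂ ω)) hint).mp hzz
    refine ⟨1, Or.inl rfl, ?_⟩
    filter_upwards [hae] with ω hω
    have hz : z₁ ω = z₂ ω := by
      have h2 : (z₁ ω - z₂ ω)^2 = 0 := hω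
      nlinarith [h2]
    have hsq : Real.sqrt ((1:ℝ) * (1 - 1) / (1 + 1)) = 0 := by norm_num
    simp only [hc, ha₃, hz, hsq]
    rw [show a₁ = 1 - a₂ by linarith]
    ring
  · -- ρ < 1 case
    have h1ρ : (0:ℝ) < 1 + ρ := by linarith
    have haeq : a₁ = a₂ := by
      have h : (a₁ - a₂) * (1 - ρ) = 0 := by linear_combination hs₁ - hs₂
      rcases mul_eq_zero.mp h with h' | h'
      · linarith
      · linarith
    have ha₁ : a₁ = ρ / (1 + ρ) := by
      have h : a₁ * (1 + ρ) = ρ := by linear_combination hs₁ - hvρ + ρ*haeq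
      field_simp
      linarith [h]
    have ha₃sq : a₃^2 = ρ * (1 - ρ) / (1 + ρ) := by
      have hA : a₁ * (1 + ρ) = ρ := by linear_combination hs₁ - hvρ + ρ*haeq
      have hv' : a₃^2 = ρ - 2*a₁^2*(1+ρ) := by
        linear_combination -hvρ + (a₁+a₂+2*a₁*ρ)*haeq
      have h : a₃^2 * (1 + ρ) = ρ * (1 - ρ) := by
        linear_combination (1+ρ)*hv' - 2*(a₁*(1+ρ)+ρ)*hA
      field_simp
      linarith [h]
    have hsqrt : Real.sqrt (ρ * (1 - ρ) / (1 + ρ)) = |a₃| := by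
      rw [← ha₃sq, Real.sqrt_sq_eq_abs]
    rcases le_or_gt 0 a₃ with hpos | hneg
    · refine ⟨1, Or.inl rfl, Filter.Eventually.of_forall fun ω => ?_⟩
      simp only [hc, hsqrt, abs_of_nonneg hpos]
      rw [ha₁, haeq.symm.trans ha₁]
      ring
    · refine ⟨-1, Or.inr rfl, Filter.Eventually.of_forall fun ω => ?_⟩
      simp only [hc, hsqrt, abs_of_neg hneg]
      rw [ha₁, haeq.symm.trans ha₁]
      ring
end
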